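/- On ℂⁿ (n ≥ 2) with standard complex structure J = i, let ∇ be the complex connection whose only nonzero Christoffel symbols in complex coordinates (z¹,...,zⁿ) are Γ²₁₁ = z̄¹ (and its conjugate Γ^{2̄}_{1̄1̄} = z¹). Then the real and imaginary parts of the vector field ∂_{z¹} - (1/2)(z̄¹)² ∂_{z̄²} are c-projective symmetries of (J,[∇]); that is, for v = Re(∂_{z¹} - (1/2)(z̄¹)² ∂_{z̄²}) (and similarly for the imaginary part), L_v J = 0 and L_v Γ has the form Ω^i_{jk} = φ_j δ^i_k + φ_k δ^i_j - φ_α J^α_j J^i_k - φ_α J^α_k J^i_j for some 1-form φ. -/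

import Mathlib

open Finset

/-- partial derivative in the `i`-th coordinate direction -/
noncomputable def pder7 {ι : Type*} [Fintype ι] [DecidableEq ι]
    (i : ι) (f : (ι → ℝ) → ℝ) (p : ι → ℝ) : ℝ :=
  fderiv ℝ f p (Pi.single i 1)

/-- the standard complex structure on `ℝ^{2n} ≅ ℂⁿ`; coordinates are indexed by
`(k, 0) ↦ x_{k+1}`, `(k, 1) ↦ y_{k+1}` where `z_{k+1} = x_{k+1} + i y_{k+1}`. -/
def Jstd7 (n : ℕ) (i j : Fin n × Fin 2) : ℝ :=
  if i.1 = j.1 ∧ i.2 = 1 ∧ j.2 = 0 then 1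
  else if i.1 = j.1 ∧ i.2 = 0 ∧ j.2 = 1 then -1 else 0

/-- the real Christoffel symbols of the connection on `ℂⁿ` with the single nonzero
complex Christoffel symbol `Γ²₁₁ = z̄¹` (plus its conjugate `Γ^{2̄}_{1̄1̄} = z¹`). -/
def Gam7 (n : ℕ) [NeZero n] (i j k : Fin n × Fin 2) (p : Fin n × Fin 2 → ℝ) : ℝ :=
  if i = ((1,0) : Fin n × Fin 2) ∧ j = ((0,0) : Fin n × Fin 2) ∧ k = ((0,0) : Fin n × Fin 2)
    then p (0,0)
  else if i = ((1,1) : Fin n × Fin 2) ∧ j = ((0,0) : Fin n × Fin 2) ∧ k = ((0,0) : Fin n × Fin 2)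
    then -p (0,1)
  else if i = ((1,0) : Fin n × Fin 2) ∧ j = ((0,1) : Fin n × Fin 2) ∧ k = ((0,1) : Fin n × Fin 2)
    then -p (0,0)
  else if i = ((1,1) : Fin n × Fin 2) ∧ j = ((0,1) : Fin n × Fin 2) ∧ k = ((0,1) : Fin n × Fin 2)
    then p (0,1)
  else if i = ((1,0) : Fin n × Fin 2) ∧
      (j = ((0,0) : Fin n × Fin 2) ∧ k = ((0,1) : Fin n × Fin 2) ∨
       j = ((0,1) : Fin n × Fin 2) ∧ k = ((0,0) : Fin n × Fin 2))
    then p (0,1)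
  else if i = ((1,1) : Fin n × Fin 2) ∧
      (j = ((0,0) : Fin n × Fin 2) ∧ k = ((0,1) : Fin n × Fin 2) ∨
       j = ((0,1) : Fin n × Fin 2) ∧ k = ((0,0) : Fin n × Fin 2))
    then p (0,0)
  else 0

/-- the Lie derivative `(L_v Γ)^i_{jk} = v^l ∂_l Γ^i_{jk} - (∂_l v^i) Γ^l_{jk}
  + (∂_j v^l) Γ^i_{lk} + (∂_k v^l) Γ^i_{jl} + ∂_j ∂_k v^i`. -/
noncomputable def LvGam7 (n : ℕ)
    (Γ : (Fin n × Fin 2) → (Fin n × Fin 2) → (Fin n × Fin 2) → (Fin n × Fin 2 → ℝ) → ℝ)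
    (v : (Fin n × Fin 2 → ℝ) → (Fin n × Fin 2) → ℝ)
    (i j k : Fin n × Fin 2) (p : Fin n × Fin 2 → ℝ) : ℝ :=
  (∑ l, v p l * pder7 l (Γ i j k) p)
  - (∑ l, pder7 l (fun q => v q i) p * Γ l j k p)
  + (∑ l, pder7 j (fun q => v q l) p * Γ i l k p)
  + (∑ l, pder7 k (fun q => v q l) p * Γ i j l p)
  + pder7 j (fun q => pder7 k (fun r => v r i) q) p

/-- `v` is a c-projective symmetry of `(J, [∇])`: `L_v J = 0` and `L_v Γ` has the pure-trace
form `Ω^i_{jk} = φ_j δ^i_k + φ_k δ^i_j - φ_α J^α_j J^i_k - φ_α J^α_k J^i_j`. -/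
noncomputable def IsCprojSym7 (n : ℕ) [NeZero n]
    (v : (Fin n × Fin 2 → ℝ) → (Fin n × Fin 2) → ℝ) : Prop :=
  (∀ (i j : Fin n × Fin 2) (p : Fin n × Fin 2 → ℝ),
    (∑ l, v p l * pder7 l (fun _ => Jstd7 n i j) p)
    + (∑ l, Jstd7 n i l * pder7 j (fun q => v q l) p)
    - (∑ l, Jstd7 n l j * pder7 l (fun q => v q i) p) = 0) ∧
  (∃ φ : (Fin n × Fin 2 → ℝ) → (Fin n × Fin 2) → ℝ,
    ∀ (i j k : Fin n × Fin 2) (p : Fin n × Fin 2 → ℝ),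
      LvGam7 n (Gam7 n) v i j k p =
        (if i = k then φ p j else 0) + (if i = j then φ p k else 0)
        - (∑ a, φ p a * Jstd7 n a j) * Jstd7 n i k
        - (∑ a, φ p a * Jstd7 n a k) * Jstd7 n i j)

/-- the real part of the complex vector field `∂_{z¹} - (1/2)(z̄¹)² ∂_{z̄²}` -/
noncomputable def vRe7 (n : ℕ) [NeZero n]
    (p : Fin n × Fin 2 → ℝ) (i : Fin n × Fin 2) : ℝ :=
  if i = ((0,0) : Fin n × Fin 2) then 1/2
  else if i = ((1,0) : Fin n × Fin 2) then -(1/4) * (p (0,0)^2 - p (0,1)^2)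
  else if i = ((1,1) : Fin n × Fin 2) then -(1/2) * p (0,0) * p (0,1)
  else 0

/-- the imaginary part of the complex vector field `∂_{z¹} - (1/2)(z̄¹)² ∂_{z̄²}` -/
noncomputable def vIm7 (n : ℕ) [NeZero n]
    (p : Fin n × Fin 2 → ℝ) (i : Fin n × Fin 2) : ℝ :=
  if i = ((0,1) : Fin n × Fin 2) then -(1/2)
  else if i = ((1,0) : Fin n × Fin 2) then (1/2) * p (0,0) * p (0,1)
  else if i = ((1,1) : Fin n × Fin 2) then -(1/4) * (p (0,0)^2 - p (0,1)^2)
  else 0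

/-!
Both fields have constant `z¹`-components, and their `z²`-components `v^{x²} + i v^{y²}` are
`-(z¹)²/4` and `-i(z¹)²/4`, holomorphic functions of `z¹` alone. So their Jacobians satisfy the
Cauchy–Riemann equations, giving `L_v J = 0`, and map `z¹`-directions to `z²`-directions. The
Christoffel symbols also have only lower `z¹`-indices and upper `z²`-indices, so every term of
`L_v Γ` contracting `Γ` with `dv` vanishes, leaving `L_v Γ = v(Γ) + ∂²v`. As `Γ` is linear in the
point, `v(Γ) = Γ(v)`, and the Hessian of `v` is the constant `-Γ(v)`. Hence `L_v Γ = 0`: the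
fields are even affine symmetries (`φ = 0`).
-/
section Calculus

variable {ι : Type*} [Fintype ι] [DecidableEq ι]

theorem pder7_const (i : ι) (c : ℝ) (p : ι → ℝ) : pder7 i (fun _ => c) p = 0 := by
  simp [pder7]

theorem sum_mul_pder7_of_isLinearMap {f : (ι → ℝ) → ℝ} (hf : IsLinearMap ℝ f) (w p : ι → ℝ) :
    ∑ l, w l * pder7 l f p = f w := by
  let L : (ι → ℝ) →L[ℝ] ℝ := LinearMap.toContinuousLinearMap (IsLinearMap.mk' f hf)
  have hL : f = L := rfl
  simp only [pder7, hL, ContinuousLinearMap.fderiv]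
  conv_rhs => rw [← univ_sum_single w]
  rw [map_sum]
  refine sum_congr rfl fun l _ => ?_
  rw [← smul_eq_mul, ← map_smul, ← Pi.single_smul, smul_eq_mul, mul_one]

end Calculus

section ComplexStructure

variable {n : ℕ}

theorem sum_Jstd7_mul_left (i : Fin n × Fin 2) (f : Fin n × Fin 2 → ℝ) :
    ∑ l, Jstd7 n i l * f l = if i.2 = 0 then -f (i.1, 1) else f (i.1, 0) := by
  obtain ⟨a, s⟩ := i
  rw [Fintype.sum_prod_type]
  fin_cases s <;> simp [Jstd7, ite_and]

theorem sum_Jstd7_mul_right (j : Fin n × Fin 2) (f : Fin n × Fin 2 → ℝ) :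
    ∑ l, Jstd7 n l j * f l = if j.2 = 0 then f (j.1, 1) else -f (j.1, 0) := by
  obtain ⟨a, s⟩ := j
  rw [Fintype.sum_prod_type]
  fin_cases s <;> simp [Jstd7, ite_and]

def CauchyRiemannAt (n : ℕ) (v : (Fin n × Fin 2 → ℝ) → Fin n × Fin 2 → ℝ)
    (p : Fin n × Fin 2 → ℝ) : Prop :=
  ∀ a b : Fin n,
    pder7 (b, 0) (fun q => v q (a, 0)) p = pder7 (b, 1) (fun q => v q (a, 1)) p ∧
    pder7 (b, 1) (fun q => v q (a, 0)) p = -pder7 (b, 0) (fun q => v q (a, 1)) p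

theorem lieDeriv_Jstd7_eq_zero {v : (Fin n × Fin 2 → ℝ) → Fin n × Fin 2 → ℝ}
    {p : Fin n × Fin 2 → ℝ} (hv : CauchyRiemannAt n v p) (i j : Fin n × Fin 2) :
    (∑ l, v p l * pder7 l (fun _ => Jstd7 n i j) p)
      + (∑ l, Jstd7 n i l * pder7 j (fun q => v q l) p)
      - (∑ l, Jstd7 n l j * pder7 l (fun q => v q i) p) = 0 := by
  obtain ⟨a, s⟩ := i
  obtain ⟨b, t⟩ := j
  obtain ⟨h₁, h₂⟩ := hv a b
  simp only [pder7_const, mul_zero, sum_const_zero, zero_add, sum_Jstd7_mul_left,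
    sum_Jstd7_mul_right]
  fin_cases s <;> fin_cases t <;> simp <;> linarith

end ComplexStructure

section LieDerivativeConnection

variable {n : ℕ}

theorem LvGam7_eq_of_support
    (Γ : Fin n × Fin 2 → Fin n × Fin 2 → Fin n × Fin 2 → (Fin n × Fin 2 → ℝ) → ℝ)
    (v : (Fin n × Fin 2 → ℝ) → Fin n × Fin 2 → ℝ) {s t : Fin n} (hst : s ≠ t)
    (hΓ : ∀ {i j k p}, Γ i j k p ≠ 0 → i.1 = t ∧ j.1 = s ∧ k.1 = s)
    (hΓlin : ∀ i j k, IsLinearMap ℝ (Γ i j k))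
    (hv : ∀ {l i p}, pder7 l (fun q => v q i) p ≠ 0 → l.1 = s ∧ i.1 = t)
    (i j k : Fin n × Fin 2) (p : Fin n × Fin 2 → ℝ) :
    LvGam7 n Γ v i j k p = Γ i j k (v p) + pder7 j (fun q => pder7 k (fun r => v r i) q) p := by
  have h₁ : ∑ l, pder7 l (fun q => v q i) p * Γ l j k p = 0 := sum_eq_zero fun l _ => by
    by_contra h
    obtain ⟨hdv, hG⟩ := mul_ne_zero_iff.mp h
    exact hst ((hv hdv).1.symm.trans (hΓ hG).1)
  have h₂ : ∑ l, pder7 j (fun q => v q l) p * Γ i l k p = 0 := sum_eq_zero fun l _ => by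
    by_contra h
    obtain ⟨hdv, hG⟩ := mul_ne_zero_iff.mp h
    exact hst ((hΓ hG).2.1.symm.trans (hv hdv).2)
  have h₃ : ∑ l, pder7 k (fun q => v q l) p * Γ i j l p = 0 := sum_eq_zero fun l _ => by
    by_contra h
    obtain ⟨hdv, hG⟩ := mul_ne_zero_iff.mp h
    exact hst ((hΓ hG).2.2.symm.trans (hv hdv).2)
  rw [LvGam7, sum_mul_pder7_of_isLinearMap (hΓlin i j k), h₁, h₂, h₃]
  ring

variable [NeZero n]

theorem Gam7_ne_zero {i j k : Fin n × Fin 2} {p : Fin n × Fin 2 → ℝ} (h : Gam7 n i j k p ≠ 0) :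
    i.1 = 1 ∧ j.1 = 0 ∧ k.1 = 0 := by
  unfold Gam7 at h
  split_ifs at h <;> aesop

theorem isLinearMap_Gam7 (i j k : Fin n × Fin 2) : IsLinearMap ℝ (Gam7 n i j k) := by
  constructor <;> intros <;> unfold Gam7 <;> split_ifs <;> simp <;> ring

theorem isCprojSym7_of_hessian_eq (h01 : (0 : Fin n) ≠ 1)
    {v : (Fin n × Fin 2 → ℝ) → Fin n × Fin 2 → ℝ}
    (hv : ∀ {l i p}, pder7 l (fun q => v q i) p ≠ 0 → l.1 = 0 ∧ i.1 = 1)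
    (hCR : ∀ p, CauchyRiemannAt n v p)
    (hHess : ∀ i j k p, pder7 j (fun q => pder7 k (fun r => v r i) q) p = -Gam7 n i j k (v p)) :
    IsCprojSym7 n v := by
  refine ⟨fun i j p => lieDeriv_Jstd7_eq_zero (hCR p) i j, fun _ _ => 0, fun i j k p => ?_⟩
  rw [LvGam7_eq_of_support _ _ h01 Gam7_ne_zero isLinearMap_Gam7 hv, hHess]
  simp

end LieDerivativeConnection

section RealPart

variable {n : ℕ} [NeZero n]

theorem pder7_vRe7 (h01 : (0 : Fin n) ≠ 1) (k i : Fin n × Fin 2) (p : Fin n × Fin 2 → ℝ) :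
    pder7 k (fun q => vRe7 n q i) p =
      if i = (1, 0) then
        (if k = (0, 0) then -(1/2) * p (0, 0) else if k = (0, 1) then 1/2 * p (0, 1) else 0)
      else if i = (1, 1) then
        (if k = (0, 0) then -(1/2) * p (0, 1) else if k = (0, 1) then -(1/2) * p (0, 0) else 0)
      else 0 := by
  obtain ⟨i, s⟩ := i
  obtain ⟨k, t⟩ := k
  by_cases hi : i = 1 <;> by_cases hk : k = 0 <;> fin_cases s <;> fin_cases t <;>
    simp (disch := fun_prop) [vRe7, pder7, fderiv_const_mul, fderiv_fun_sub, fderiv_fun_mul,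
      fderiv_fun_pow, fderiv_apply, Pi.single_apply, hi, hk, @eq_comm _ (0 : Fin n), h01.symm] <;>
    ring

theorem pder7_vRe7_ne_zero (h01 : (0 : Fin n) ≠ 1) {l i : Fin n × Fin 2}
    {p : Fin n × Fin 2 → ℝ} (h : pder7 l (fun q => vRe7 n q i) p ≠ 0) : l.1 = 0 ∧ i.1 = 1 := by
  rw [pder7_vRe7 h01] at h
  split_ifs at h <;> simp_all

theorem cauchyRiemannAt_vRe7 (h01 : (0 : Fin n) ≠ 1) (p : Fin n × Fin 2 → ℝ) :
    CauchyRiemannAt n (vRe7 n) p := by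
  intro a b
  simp only [pder7_vRe7 h01]
  by_cases ha : a = 1 <;> by_cases hb : b = 0 <;> simp [ha, hb]

theorem hessian_vRe7 (h01 : (0 : Fin n) ≠ 1) (i j k : Fin n × Fin 2) (p : Fin n × Fin 2 → ℝ) :
    pder7 j (fun q => pder7 k (fun r => vRe7 n r i) q) p = -Gam7 n i j k (vRe7 n p) := by
  simp only [pder7_vRe7 h01]
  obtain ⟨i, s⟩ := i
  obtain ⟨j, t⟩ := j
  obtain ⟨k, u⟩ := k
  by_cases hi : i = 1 <;> by_cases hj : j = 0 <;> by_cases hk : k = 0 <;>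
    fin_cases s <;> fin_cases t <;> fin_cases u <;>
    simp (disch := fun_prop) [Gam7, vRe7, pder7, fderiv_const_mul, fderiv_apply, Pi.single_apply,
      hi, hj, hk, @eq_comm _ (0 : Fin n), h01.symm]

end RealPart

section ImaginaryPart

variable {n : ℕ} [NeZero n]

theorem pder7_vIm7 (h01 : (0 : Fin n) ≠ 1) (k i : Fin n × Fin 2) (p : Fin n × Fin 2 → ℝ) :
    pder7 k (fun q => vIm7 n q i) p =
      if i = (1, 0) then
        (if k = (0, 0) then 1/2 * p (0, 1) else if k = (0, 1) then 1/2 * p (0, 0) else 0)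
      else if i = (1, 1) then
        (if k = (0, 0) then -(1/2) * p (0, 0) else if k = (0, 1) then 1/2 * p (0, 1) else 0)
      else 0 := by
  obtain ⟨i, s⟩ := i
  obtain ⟨k, t⟩ := k
  by_cases hi : i = 1 <;> by_cases hk : k = 0 <;> fin_cases s <;> fin_cases t <;>
    simp (disch := fun_prop) [vIm7, pder7, fderiv_const_mul, fderiv_fun_sub, fderiv_fun_mul,
      fderiv_fun_pow, fderiv_apply, Pi.single_apply, hi, hk, @eq_comm _ (0 : Fin n), h01.symm] <;>
    ring

theorem pder7_vIm7_ne_zero (h01 : (0 : Fin n) ≠ 1) {l i : Fin n × Fin 2}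
    {p : Fin n × Fin 2 → ℝ} (h : pder7 l (fun q => vIm7 n q i) p ≠ 0) : l.1 = 0 ∧ i.1 = 1 := by
  rw [pder7_vIm7 h01] at h
  split_ifs at h <;> simp_all

theorem cauchyRiemannAt_vIm7 (h01 : (0 : Fin n) ≠ 1) (p : Fin n × Fin 2 → ℝ) :
    CauchyRiemannAt n (vIm7 n) p := by
  intro a b
  simp only [pder7_vIm7 h01]
  by_cases ha : a = 1 <;> by_cases hb : b = 0 <;> simp [ha, hb]

theorem hessian_vIm7 (h01 : (0 : Fin n) ≠ 1) (i j k : Fin n × Fin 2) (p : Fin n × Fin 2 → ℝ) :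
    pder7 j (fun q => pder7 k (fun r => vIm7 n r i) q) p = -Gam7 n i j k (vIm7 n p) := by
  simp only [pder7_vIm7 h01]
  obtain ⟨i, s⟩ := i
  obtain ⟨j, t⟩ := j
  obtain ⟨k, u⟩ := k
  by_cases hi : i = 1 <;> by_cases hj : j = 0 <;> by_cases hk : k = 0 <;>
    fin_cases s <;> fin_cases t <;> fin_cases u <;>
    simp (disch := fun_prop) [Gam7, vIm7, pder7, fderiv_const_mul, fderiv_apply, Pi.single_apply,
      hi, hj, hk, @eq_comm _ (0 : Fin n), h01.symm]

end ImaginaryPart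

theorem submaximal_cprojective_stmt7 (n : ℕ) (hn : 2 ≤ n) :
    haveI : NeZero n := ⟨by omega⟩
    IsCprojSym7 n (vRe7 n) ∧ IsCprojSym7 n (vIm7 n) := by
  have : NeZero n := ⟨by omega⟩
  have h01 : (0 : Fin n) ≠ 1 := by
    obtain ⟨m, rfl⟩ : ∃ m, n = m + 2 := ⟨n - 2, by omega⟩
    exact Fin.zero_ne_one
  exact ⟨isCprojSym7_of_hessian_eq h01 (pder7_vRe7_ne_zero h01) (cauchyRiemannAt_vRe7 h01)
      (hessian_vRe7 h01),
    isCprojSym7_of_hessian_eq h01 (pder7_vIm7_ne_zero h01) (cauchyRiemannAt_vIm7 h01)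
      (hessian_vIm7 h01)⟩
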